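/- arXiv:1711.05030 — 2 statements merged into one kernel-verified Lean document; each statement's English description precedes it below -/
import Mathlib

section
/- For E = E_{lr}(U, b, u) the upper annihilating series is given by: ann^j(E) = 0 × … × 0 × F^j (zeros in all of F^l, in U, and in the first r−j slots of F^r) for j = 1, …, r; ann^{r+1}(E) = 0 × … × 0 × U × F^r (zeros in F^l); and ann^{r+1+m}(E) = 0 × … × 0 × F^m × U × F^r (zeros in the first l−m slots of F^l) for m = 1, …, l; in particular ann^{r+1+l}(E) = E. -/
/-!
Multiplication in `E_{lr}` moves both coordinate chains `F^l` and `F^r` one slot towards their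
start, sending `b(x, y)` into the first slot of `F^r` and `α_l γ_l u` into `U`. So, modulo the
last `j` slots of `F^r`, an element annihilates `E` exactly when it lies in the last `j + 1` slots:
nondegeneracy of `b` forces its `U`-part to vanish and `u ≠ 0` forces `α_l = 0`. Once all of `F^r`
is reached, the `U`-part is free, and from then on the same shifting climbs up `F^l`.
-/

variable {F : Type*} [Field F] {A : Type*} [AddCommGroup A] [Module F A]

/-- For a bilinear multiplication `mul` on `A` and a submodule `S`, the preimage in `A` of the
annihilator of `A/S`, i.e. `{x | x·A ⊆ S and A·x ⊆ S}`. -/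
def annSucc (mul : A →ₗ[F] A →ₗ[F] A) (S : Submodule F A) : Submodule F A where
  carrier := {x | ∀ y : A, mul x y ∈ S ∧ mul y x ∈ S}
  zero_mem' := by intro y; simp
  add_mem' := by
    intro a b ha hb y
    refine ⟨?_, ?_⟩
    · simpa [map_add, LinearMap.add_apply] using S.add_mem (ha y).1 (hb y).1
    · simpa [map_add, LinearMap.add_apply] using S.add_mem (ha y).2 (hb y).2
  smul_mem' := by
    intro c a ha y
    refine ⟨?_, ?_⟩
    · simpa [map_smul, LinearMap.smul_apply] using S.smul_mem c (ha y).1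
    · simpa [map_smul, LinearMap.smul_apply] using S.smul_mem c (ha y).2

/-- The upper annihilating series: `annSeq mul 0 = 0`, and
`annSeq mul (i+1)` is the preimage in `A` of `ann(A / annSeq mul i)`. -/
def annSeq (mul : A →ₗ[F] A →ₗ[F] A) : ℕ → Submodule F A
  | 0 => ⊥
  | i + 1 => annSucc mul (annSeq mul i)

/-- A basis is natural if the product of distinct basis vectors vanishes. -/
def IsNaturalBasis {ι : Type*} (mul : A →ₗ[F] A →ₗ[F] A) (e : Module.Basis ι F A) : Prop :=
  ∀ i j, i ≠ j → mul (e i) (e j) = 0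

/-- An evolution algebra: a commutative algebra admitting a natural basis. -/
def IsEvolutionAlgebra (mul : A →ₗ[F] A →ₗ[F] A) : Prop :=
  (∀ x y, mul x y = mul y x) ∧ ∃ (n : ℕ) (e : Module.Basis (Fin n) F A), IsNaturalBasis mul e

/-- The (nilpotent) algebra `(A, mul)` has type `[n_1, …, n_r]`:  `r` is the least index with
`ann^r(A) = A` and `n_i = dim ann^i(A) - dim ann^{i-1}(A)`. -/
def HasType (mul : A →ₗ[F] A →ₗ[F] A) (L : List ℕ) : Prop :=
  annSeq mul L.length = ⊤ ∧ (∀ j < L.length, annSeq mul j ≠ ⊤) ∧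
  ∀ (i : ℕ) (h : i < L.length),
    L.get ⟨i, h⟩ =
      Module.finrank F (annSeq mul (i + 1)) - Module.finrank F (annSeq mul i)

def SupportedOnLast {R : Type*} [Zero R] {n : ℕ} (m : ℕ) (v : Fin n → R) : Prop :=
  ∀ i : Fin n, (i : ℕ) + m < n → v i = 0

/-- How `E_{lr}` multiplies the `F^l` and the `F^r` components. -/
def shiftMul {R : Type*} [Mul R] {n : ℕ} (c : R) (v w : Fin (n + 1) → R) : Fin (n + 1) → R :=
  Fin.cases c ((v * w) ∘ Fin.castSucc)

theorem shiftMul_comm {R : Type*} [CommMagma R] {n : ℕ} (c : R) (v w : Fin (n + 1) → R) :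
    shiftMul c v w = shiftMul c w v := by
  unfold shiftMul
  rw [mul_comm v w]

namespace SupportedOnLast

variable {R : Type*} {n m : ℕ}

section Zero

variable [Zero R]

theorem zero_iff {v : Fin n → R} : SupportedOnLast 0 v ↔ v = 0 := by
  simp [SupportedOnLast, funext_iff]

theorem of_le (h : n ≤ m) (v : Fin n → R) : SupportedOnLast m v :=
  fun _ hi => absurd hi (by omega)

theorem cases_iff {c : R} {v : Fin n → R} :
    SupportedOnLast m (Fin.cases c v : Fin (n + 1) → R) ↔
      (m ≤ n → c = 0) ∧ SupportedOnLast m v := by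
  simp only [SupportedOnLast, Fin.forall_fin_succ, Fin.cases_zero, Fin.cases_succ, Fin.val_zero,
    Fin.val_succ]
  constructor <;> rintro ⟨h0, hs⟩ <;> exact ⟨fun h => h0 (by omega), fun i hi => hs i (by omega)⟩

theorem comp_castSucc_iff {v : Fin (n + 1) → R} :
    SupportedOnLast m (v ∘ Fin.castSucc) ↔ SupportedOnLast (m + 1) v := by
  simp only [SupportedOnLast, Fin.forall_fin_succ', Function.comp_apply, Fin.val_castSucc,
    Fin.val_last]
  constructor
  · exact fun h => ⟨fun i hi => h i (by omega), fun hn => absurd hn (by omega)⟩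
  · exact fun h i hi => h.1 i (by omega)

theorem one_and_last_iff {v : Fin (n + 1) → R} :
    SupportedOnLast 1 v ∧ v (Fin.last n) = 0 ↔ v = 0 := by
  rw [← comp_castSucc_iff, zero_iff, funext_iff, funext_iff, Fin.forall_fin_succ']
  rfl

end Zero

theorem forall_mul_iff [MulZeroOneClass R] {v : Fin n → R} :
    (∀ w, SupportedOnLast m (v * w)) ↔ SupportedOnLast m v :=
  ⟨fun h => by simpa using h 1, fun h w i hi => by simp [h i hi]⟩

theorem shiftMul_iff [MulZeroClass R] {c : R} {v w : Fin (n + 1) → R} :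
    SupportedOnLast m (shiftMul c v w) ↔ (m ≤ n → c = 0) ∧ SupportedOnLast (m + 1) (v * w) := by
  unfold shiftMul
  rw [cases_iff, comp_castSucc_iff]

theorem forall_shiftMul_zero_iff [MulZeroOneClass R] {v : Fin (n + 1) → R} :
    (∀ w, SupportedOnLast m (shiftMul 0 v w)) ↔ SupportedOnLast (m + 1) v := by
  simp only [shiftMul_iff, imp_true_iff, true_and, forall_mul_iff]

theorem shiftMul_zero_eq_zero_iff [MulZeroClass R] {v w : Fin (n + 1) → R} :
    shiftMul 0 v w = 0 ↔ SupportedOnLast 1 (v * w) := by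
  rw [← zero_iff, shiftMul_iff]
  simp

end SupportedOnLast

theorem coe_annSucc_of_comm {mul : A →ₗ[F] A →ₗ[F] A} (hcomm : ∀ x y, mul x y = mul y x)
    (S : Submodule F A) : (annSucc mul S : Set A) = {x | ∀ y, mul x y ∈ (S : Set A)} :=
  Set.ext fun x => ⟨fun h y => (h y).1, fun h y => ⟨h y, hcomm y x ▸ h y⟩⟩

theorem coe_annSeq_add {mul : A →ₗ[F] A →ₗ[F] A} {T : ℕ → Set A} {k N : ℕ}
    (h0 : (annSeq mul k : Set A) = T 0)
    (hstep : ∀ m < N, ∀ S : Submodule F A,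
      (S : Set A) = T m → (annSucc mul S : Set A) = T (m + 1)) :
    ∀ m ≤ N, (annSeq mul (k + m) : Set A) = T m
  | 0, _ => h0
  | m + 1, hm => hstep m hm _ (coe_annSeq_add h0 hstep m (by omega))

/-- `E_{lr}` with `l = a + 1` and `r = d + 1`. -/
abbrev Elr (K V : Type*) (a d : ℕ) : Type _ := (Fin (a + 1) → K) × V × (Fin (d + 1) → K)

section Elr

variable {U : Type*} {a d : ℕ}

/-- `0 × F^m × U × F^r`, the `F^m` being the last `m` slots of `F^l`. -/
def leftTail (m : ℕ) : Set (Elr F U a d) :=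
  {p | SupportedOnLast m p.1}

theorem leftTail_zero : (leftTail 0 : Set (Elr F U a d)) = {p | p.1 = 0} := by
  ext p
  exact SupportedOnLast.zero_iff

theorem leftTail_of_le {m : ℕ} (hm : a + 1 ≤ m) : (leftTail m : Set (Elr F U a d)) = Set.univ :=
  Set.eq_univ_of_forall fun p => SupportedOnLast.of_le hm p.1

variable [AddCommGroup U]

/-- `0 × 0 × F^j`, the `F^j` being the last `j` slots of `F^r`. -/
def rightTail (j : ℕ) : Set (Elr F U a d) :=
  {p | p.1 = 0 ∧ p.2.1 = 0 ∧ SupportedOnLast j p.2.2}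

theorem rightTail_zero : (rightTail 0 : Set (Elr F U a d)) = {0} := by
  ext ⟨α, x, β⟩
  simp [rightTail, SupportedOnLast.zero_iff]

variable [Module F U]

def IsElrProduct (b : U →ₗ[F] U →ₗ[F] F) (u : U)
    (mul : Elr F U a d →ₗ[F] Elr F U a d →ₗ[F] Elr F U a d) : Prop :=
  ∀ α γ x y β δ, mul (α, x, β) (γ, y, δ) =
    (shiftMul 0 α γ, (α (Fin.last a) * γ (Fin.last a)) • u, shiftMul (b x y) β δ)

variable {b : U →ₗ[F] U →ₗ[F] F} {u : U} {mul : Elr F U a d →ₗ[F] Elr F U a d →ₗ[F] Elr F U a d}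

theorem IsElrProduct.mul_mk (hmul : IsElrProduct b u mul) (α γ : Fin (a + 1) → F) (x y : U)
    (β δ : Fin (d + 1) → F) : mul (α, x, β) (γ, y, δ) =
      (shiftMul 0 α γ, (α (Fin.last a) * γ (Fin.last a)) • u, shiftMul (b x y) β δ) :=
  hmul α γ x y β δ

theorem IsElrProduct.comm (hmul : IsElrProduct b u mul) (hb : ∀ x y, b x y = b y x)
    (p q : Elr F U a d) : mul p q = mul q p := by
  obtain ⟨α, x, β⟩ := p
  obtain ⟨γ, y, δ⟩ := q
  rw [hmul, hmul, shiftMul_comm _ α, shiftMul_comm _ β, hb, mul_comm (α _)]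

theorem forall_mul_last_smul_eq_zero_iff (hu : u ≠ 0) {α : Fin (a + 1) → F} :
    (∀ γ : Fin (a + 1) → F, (α (Fin.last a) * γ (Fin.last a)) • u = 0) ↔ α (Fin.last a) = 0 :=
  ⟨fun h => by simpa [hu] using h 1, fun h γ => by simp [h]⟩

theorem forall_eq_zero_iff_of_nondegenerate (hbnd : ∀ x : U, (∀ y : U, b x y = 0) → x = 0)
    {x : U} : (∀ y, b x y = 0) ↔ x = 0 :=
  ⟨hbnd x, by rintro rfl; simp⟩

theorem IsElrProduct.annSucc_rightTail (hmul : IsElrProduct b u mul) (hb : ∀ x y, b x y = b y x)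
    (hbnd : ∀ x : U, (∀ y : U, b x y = 0) → x = 0) (hu : u ≠ 0) {j : ℕ} (hj : j ≤ d)
    {S : Submodule F (Elr F U a d)} (hS : (S : Set (Elr F U a d)) = rightTail j) :
    (annSucc mul S : Set (Elr F U a d)) = rightTail (j + 1) := by
  rw [coe_annSucc_of_comm (hmul.comm hb), hS]
  ext ⟨α, x, β⟩
  simp only [rightTail, Set.mem_ofPred_eq, Prod.forall, hmul.mul_mk,
    SupportedOnLast.shiftMul_zero_eq_zero_iff, SupportedOnLast.shiftMul_iff, hj,
    forall_and, forall_const, SupportedOnLast.forall_mul_iff, forall_mul_last_smul_eq_zero_iff hu,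
    forall_eq_zero_iff_of_nondegenerate hbnd]
  rw [← and_assoc, SupportedOnLast.one_and_last_iff]

theorem IsElrProduct.annSucc_rightTail_last (hmul : IsElrProduct b u mul)
    (hb : ∀ x y, b x y = b y x) (hu : u ≠ 0) {S : Submodule F (Elr F U a d)}
    (hS : (S : Set (Elr F U a d)) = rightTail (d + 1)) :
    (annSucc mul S : Set (Elr F U a d)) = leftTail 0 := by
  rw [coe_annSucc_of_comm (hmul.comm hb), hS]
  ext ⟨α, x, β⟩
  simp only [rightTail, leftTail, Set.mem_ofPred_eq, Prod.forall, hmul.mul_mk,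
    SupportedOnLast.shiftMul_zero_eq_zero_iff, SupportedOnLast.of_le le_rfl, and_true,
    forall_and, forall_const, SupportedOnLast.forall_mul_iff, forall_mul_last_smul_eq_zero_iff hu]
  rw [SupportedOnLast.one_and_last_iff, SupportedOnLast.zero_iff]

theorem IsElrProduct.annSucc_leftTail (hmul : IsElrProduct b u mul) (hb : ∀ x y, b x y = b y x)
    {m : ℕ} {S : Submodule F (Elr F U a d)} (hS : (S : Set (Elr F U a d)) = leftTail m) :
    (annSucc mul S : Set (Elr F U a d)) = leftTail (m + 1) := by
  rw [coe_annSucc_of_comm (hmul.comm hb), hS]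
  ext ⟨α, x, β⟩
  simp only [leftTail, Set.mem_ofPred_eq, Prod.forall, hmul.mul_mk, forall_const,
    SupportedOnLast.forall_shiftMul_zero_iff]

end Elr

theorem Elr_annSeq_general
    {U : Type*} [AddCommGroup U] [Module F U]
    (b : U →ₗ[F] U →ₗ[F] F)
    (hbsymm : ∀ x y : U, b x y = b y x)
    (hbnd : ∀ x : U, (∀ y : U, b x y = 0) → x = 0)
    (u : U) (hu : u ≠ 0)
    (a d : ℕ)  -- `l = a + 1`, `r = d + 1`
    (mul : ((Fin (a + 1) → F) × U × (Fin (d + 1) → F)) →ₗ[F]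
      ((Fin (a + 1) → F) × U × (Fin (d + 1) → F)) →ₗ[F]
      ((Fin (a + 1) → F) × U × (Fin (d + 1) → F)))
    (hmul : ∀ (α γ : Fin (a + 1) → F) (x y : U) (β δ : Fin (d + 1) → F),
      mul (α, x, β) (γ, y, δ) =
        (Fin.cases (motive := fun _ => F) 0
            (fun j : Fin a => α j.castSucc * γ j.castSucc),
         (α (Fin.last a) * γ (Fin.last a)) • u,
         Fin.cases (motive := fun _ => F) (b x y)
            (fun j : Fin d => β j.castSucc * δ j.castSucc))) :
    (∀ j : ℕ, 1 ≤ j → j ≤ d + 1 →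
      (annSeq mul j : Set ((Fin (a + 1) → F) × U × (Fin (d + 1) → F))) =
        {p | p.1 = 0 ∧ p.2.1 = 0 ∧
          ∀ i : Fin (d + 1), (i : ℕ) + j < d + 1 → p.2.2 i = 0}) ∧
    ((annSeq mul (d + 2) : Set ((Fin (a + 1) → F) × U × (Fin (d + 1) → F))) =
      {p | p.1 = 0}) ∧
    (∀ m : ℕ, 1 ≤ m → m ≤ a + 1 →
      (annSeq mul (d + 2 + m) : Set ((Fin (a + 1) → F) × U × (Fin (d + 1) → F))) =
        {p | ∀ i : Fin (a + 1), (i : ℕ) + m < a + 1 → p.1 i = 0}) ∧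
    annSeq mul (d + 2 + (a + 1)) = ⊤ := by
  have hE : IsElrProduct b u mul := hmul
  have hright : ∀ j ≤ d + 1, (annSeq mul j : Set (Elr F U a d)) = rightTail j := fun j hj => by
    simpa using coe_annSeq_add (k := 0) (by rw [annSeq, Submodule.bot_coe, rightTail_zero])
      (fun i hi S hS => hE.annSucc_rightTail hbsymm hbnd hu (by omega) hS) j hj
  have hleft : ∀ m ≤ a + 1, (annSeq mul (d + 2 + m) : Set (Elr F U a d)) = leftTail m :=
    coe_annSeq_add (hE.annSucc_rightTail_last hbsymm hu (hright (d + 1) le_rfl))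
      fun m _ S hS => hE.annSucc_leftTail hbsymm hS
  refine ⟨fun j _ hj => hright j hj, ?_, fun m _ hm => hleft m hm, ?_⟩
  · rw [← leftTail_zero]
    exact hleft 0 (Nat.zero_le _)
  · rw [← Submodule.coe_eq_univ, hleft (a + 1) le_rfl, leftTail_of_le le_rfl]

/-- (Here `l = a + 1`, `r = d + 1`.) For `E = E_{lr}(U, b, u)`:
`ann^j(E) = 0 × 0 × F^j` (last `j` slots of `F^r`) for `j = 1, …, r`;
`ann^{r+1}(E) = 0 × U × F^r`;
`ann^{r+1+m}(E) = 0 × F^m × U × F^r` (last `m` slots of `F^l`) for `m = 1, …, l`;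
in particular `ann^{r+1+l}(E) = E`. -/
theorem Elr_annSeq
    (h2 : (2 : F) ≠ 0)
    {U : Type*} [AddCommGroup U] [Module F U] [FiniteDimensional F U]
    (n : ℕ) (hdimU : Module.finrank F U = n)
    (b : U →ₗ[F] U →ₗ[F] F)
    (hbsymm : ∀ x y : U, b x y = b y x)
    (hbnd : ∀ x : U, (∀ y : U, b x y = 0) → x = 0)
    (u : U) (hu : u ≠ 0)
    (a d : ℕ)  -- `l = a + 1`, `r = d + 1`
    (mul : ((Fin (a + 1) → F) × U × (Fin (d + 1) → F)) →ₗ[F]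
      ((Fin (a + 1) → F) × U × (Fin (d + 1) → F)) →ₗ[F]
      ((Fin (a + 1) → F) × U × (Fin (d + 1) → F)))
    (hmul : ∀ (α γ : Fin (a + 1) → F) (x y : U) (β δ : Fin (d + 1) → F),
      mul (α, x, β) (γ, y, δ) =
        (Fin.cases (motive := fun _ => F) 0
            (fun j : Fin a => α j.castSucc * γ j.castSucc),
         (α (Fin.last a) * γ (Fin.last a)) • u,
         Fin.cases (motive := fun _ => F) (b x y)
            (fun j : Fin d => β j.castSucc * δ j.castSucc))) :
    (∀ j : ℕ, 1 ≤ j → j ≤ d + 1 →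
      (annSeq mul j : Set ((Fin (a + 1) → F) × U × (Fin (d + 1) → F))) =
        {p | p.1 = 0 ∧ p.2.1 = 0 ∧
          ∀ i : Fin (d + 1), (i : ℕ) + j < d + 1 → p.2.2 i = 0}) ∧
    ((annSeq mul (d + 2) : Set ((Fin (a + 1) → F) × U × (Fin (d + 1) → F))) =
      {p | p.1 = 0}) ∧
    (∀ m : ℕ, 1 ≤ m → m ≤ a + 1 →
      (annSeq mul (d + 2 + m) : Set ((Fin (a + 1) → F) × U × (Fin (d + 1) → F))) =
        {p | ∀ i : Fin (a + 1), (i : ℕ) + m < a + 1 → p.1 i = 0}) ∧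
    annSeq mul (d + 2 + (a + 1)) = ⊤ :=
  Elr_annSeq_general b hbsymm hbnd u hu a d mul hmul
end

section
/- Let l ≥ 2, and let E be an evolution algebra over F of type [1, …, 1, n, 1, …, 1] (l ones, then n, then r ones) with natural basis {h_1, …, h_{l+n+r}} whose multiplication satisfies: h_i² = h_{i+1} + h_{i+2} for i = 1, …, l; h_{l+t}² = Σ_{j=l+n+1}^{l+n+r} α_{l+t,j} h_j for t = 1, …, n; h_{l+n+m}² = h_{l+n+m+1} + h_{l+n+m+2} for m = 1, …, r−2; h_{l+n+r−1}² = h_{l+n+r}; and h_{l+n+r}² = 0. Then E is not isomorphic to E_{lr}(U, b, u) for any n-dimensional F-vector space U, nondegenerate symmetric bilinear form b on U, and nonzero u ∈ U. -/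
variable {F : Type*} [Field F] {A : Type*} [AddCommGroup A] [Module F A]

/-!
An isomorphism preserves the upper annihilating series. In `E_{lr}` the first basis vector `f`
lies outside `ann^{l+r}` and satisfies `f f² = 0` and `f² (f²)² = 0`. Every `h_i` with `i ≥ 2`
lies in `ann^{l+r}`, so the preimage `x` of `f` has a nonzero `h₁`-coordinate `c`, and the
`h₃`-coordinate of `x x²` forces the `h₂`-coordinate of `x` to vanish. Put `z = x²`. If `l ≥ 3`,
the `h₄`-coordinate of `z z²` is `c⁶ ≠ 0`. If `l = 2`, the `h_{l+n+1}`-coordinate of `z z²` shows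
that `h_{l+1}²` lies in `span {h_{l+n+2}, …}`, so `h_{l+1}` and the last `r` basis vectors are
`r + 1` independent vectors in `ann^r`, whereas `ann^r(E_{lr}) ⊆ 0 × 0 × F^r`.
-/

theorem Module.Basis.mem_of_forall_repr_ne_zero {ι : Type*} [Fintype ι] (e : Module.Basis ι F A)
    {S : Submodule F A} {x : A} (hx : ∀ j, e.repr x j ≠ 0 → e j ∈ S) : x ∈ S := by
  rw [← e.sum_repr x]
  refine S.sum_mem fun j _ => ?_
  by_cases hj : e.repr x j = 0
  · simp [hj]
  · exact S.smul_mem _ (hx j hj)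

theorem Module.Basis.eq_of_repr_self_ne_zero {ι : Type*} (e : Module.Basis ι F A) {i k : ι}
    (hk : e.repr (e i) k ≠ 0) : k = i := by
  by_contra hne
  simp [Ne.symm hne] at hk

theorem Module.Basis.eq_or_eq_of_repr_add_ne_zero {ι : Type*} (e : Module.Basis ι F A)
    {i j k : ι} (hk : e.repr (e i + e j) k ≠ 0) : k = i ∨ k = j := by
  by_contra! hne
  simp [Ne.symm hne.1, Ne.symm hne.2] at hk

theorem Module.Basis.card_le_finrank_of_mem {ι κ : Type*} [Fintype κ] [Module.Finite F A]
    (e : Module.Basis ι F A) {S : Submodule F A} {f : κ → ι} (hf : Function.Injective f)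
    (hS : ∀ t, e (f t) ∈ S) : Fintype.card κ ≤ Module.finrank F S :=
  LinearIndependent.fintype_card_le_finrank (M := S) (b := fun t => ⟨e (f t), hS t⟩) <|
    LinearIndependent.of_comp S.subtype (e.linearIndependent.comp f hf)

section NaturalBasis

variable {ι : Type*} [Fintype ι] {mul : A →ₗ[F] A →ₗ[F] A} {e : Module.Basis ι F A}

theorem IsNaturalBasis.mul_eq_sum (he : IsNaturalBasis mul e) (x y : A) :
    mul x y = ∑ j, (e.repr x j * e.repr y j) • mul (e j) (e j) := by
  classical
  conv_lhs => rw [← e.sum_repr x, ← e.sum_repr y]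
  simp only [map_sum, map_smul, LinearMap.sum_apply, LinearMap.smul_apply]
  refine Finset.sum_congr rfl fun j _ => ?_
  rw [Finset.sum_eq_single j (fun i _ hi => by rw [he i j hi, smul_zero])
    (by simp), smul_smul, mul_comm]

theorem IsNaturalBasis.repr_mul (he : IsNaturalBasis mul e) (x y : A) (k : ι) :
    e.repr (mul x y) k = ∑ j, e.repr x j * e.repr y j * e.repr (mul (e j) (e j)) k := by
  simp [he.mul_eq_sum x y, Finsupp.finsetSum_apply]

theorem IsNaturalBasis.exists_of_repr_mul_ne_zero (he : IsNaturalBasis mul e) {x y : A} {k : ι}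
    (hk : e.repr (mul x y) k ≠ 0) :
    ∃ j, e.repr x j ≠ 0 ∧ e.repr y j ≠ 0 ∧ e.repr (mul (e j) (e j)) k ≠ 0 := by
  rw [he.repr_mul] at hk
  obtain ⟨j, -, hj⟩ := Finset.exists_ne_zero_of_sum_ne_zero hk
  simp only [ne_eq, mul_eq_zero, not_or] at hj
  exact ⟨j, hj.1.1, hj.1.2, hj.2⟩

theorem IsNaturalBasis.mul_basis_left (he : IsNaturalBasis mul e) (j : ι) (y : A) :
    mul (e j) y = e.repr y j • mul (e j) (e j) := by
  classical
  rw [he.mul_eq_sum, Fintype.sum_eq_single j fun i hi => by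
    simp [Finsupp.single_eq_of_ne hi]]
  simp

theorem IsNaturalBasis.mul_basis_right (he : IsNaturalBasis mul e) (j : ι) (y : A) :
    mul y (e j) = e.repr y j • mul (e j) (e j) := by
  classical
  rw [he.mul_eq_sum, Fintype.sum_eq_single j fun i hi => by
    simp [Finsupp.single_eq_of_ne hi]]
  simp

theorem IsNaturalBasis.basis_mem_annSucc (he : IsNaturalBasis mul e) {S : Submodule F A} {j : ι}
    (hj : mul (e j) (e j) ∈ S) : e j ∈ annSucc mul S := fun y =>
  ⟨he.mul_basis_left j y ▸ S.smul_mem _ hj, he.mul_basis_right j y ▸ S.smul_mem _ hj⟩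

end NaturalBasis

section Isomorphism

variable {B : Type*} [AddCommGroup B] [Module F B] {mulA : A →ₗ[F] A →ₗ[F] A}
  {mulB : B →ₗ[F] B →ₗ[F] B} (φ : A ≃ₗ[F] B)

theorem mem_annSeq_iff_of_map_mul (hφ : ∀ x y, φ (mulA x y) = mulB (φ x) (φ y)) (k : ℕ) (x : A) :
    x ∈ annSeq mulA k ↔ φ x ∈ annSeq mulB k := by
  induction k generalizing x with
  | zero => simp [annSeq]
  | succ k ih =>
    refine ⟨fun hx w => ?_, fun hx y => ?_⟩
    · obtain ⟨y, rfl⟩ := φ.surjective w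
      rw [← hφ, ← hφ, ← ih, ← ih]
      exact hx y
    · rw [ih, ih, hφ, hφ]
      exact hx (φ y)

theorem map_annSeq_of_map_mul (hφ : ∀ x y, φ (mulA x y) = mulB (φ x) (φ y)) (k : ℕ) :
    (annSeq mulA k).map (φ : A →ₗ[F] B) = annSeq mulB k := by
  ext w
  refine ⟨?_, fun hw => ⟨φ.symm w, ?_, φ.apply_symm_apply w⟩⟩
  · rintro ⟨x, hx, rfl⟩
    exact (mem_annSeq_iff_of_map_mul φ hφ k x).1 hx
  · rwa [SetLike.mem_coe, mem_annSeq_iff_of_map_mul φ hφ, φ.apply_symm_apply]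

theorem finrank_annSeq_eq_of_map_mul (hφ : ∀ x y, φ (mulA x y) = mulB (φ x) (φ y)) (k : ℕ) :
    Module.finrank F (annSeq mulA k) = Module.finrank F (annSeq mulB k) := by
  rw [← map_annSeq_of_map_mul φ hφ, LinearEquiv.finrank_map_eq]

end Isomorphism

abbrev ElrSpace (F U : Type*) [Field F] [AddCommGroup U] [Module F U] (a d : ℕ) :=
  (Fin (a + 1) → F) × U × (Fin (d + 1) → F)

section Elr

variable {U : Type*} [AddCommGroup U] [Module F U] {a d : ℕ} {b : U →ₗ[F] U →ₗ[F] F} {u : U}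
  {mul : ElrSpace F U a d →ₗ[F] ElrSpace F U a d →ₗ[F] ElrSpace F U a d}

variable (b u mul) in
/-- The product of `E_{lr}(U, b, u)` with `l = a + 1` and `r = d + 1`. -/
def IsElrMul : Prop :=
  ∀ (α γ : Fin (a + 1) → F) (x y : U) (β δ : Fin (d + 1) → F),
    mul (α, x, β) (γ, y, δ) =
      (Fin.cases (motive := fun _ => F) 0 (fun j : Fin a => α j.castSucc * γ j.castSucc),
       (α (Fin.last a) * γ (Fin.last a)) • u,
       Fin.cases (motive := fun _ => F) (b x y) (fun j : Fin d => β j.castSucc * δ j.castSucc))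

namespace IsElrMul

theorem fst_zero (hE : IsElrMul b u mul) (p w : ElrSpace F U a d) : (mul p w).1 0 = 0 := by
  rw [hE p.1 w.1 p.2.1 w.2.1 p.2.2 w.2.2]; rfl

theorem fst_succ (hE : IsElrMul b u mul) (p w : ElrSpace F U a d) (j : Fin a) :
    (mul p w).1 j.succ = p.1 j.castSucc * w.1 j.castSucc := by
  rw [hE p.1 w.1 p.2.1 w.2.1 p.2.2 w.2.2]; rfl

theorem snd_fst (hE : IsElrMul b u mul) (p w : ElrSpace F U a d) :
    (mul p w).2.1 = (p.1 (Fin.last a) * w.1 (Fin.last a)) • u := by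
  rw [hE p.1 w.1 p.2.1 w.2.1 p.2.2 w.2.2]

theorem snd_snd_zero (hE : IsElrMul b u mul) (p w : ElrSpace F U a d) :
    (mul p w).2.2 0 = b p.2.1 w.2.1 := by
  rw [hE p.1 w.1 p.2.1 w.2.1 p.2.2 w.2.2]; rfl

theorem snd_snd_succ (hE : IsElrMul b u mul) (p w : ElrSpace F U a d) (j : Fin d) :
    (mul p w).2.2 j.succ = p.2.2 j.castSucc * w.2.2 j.castSucc := by
  rw [hE p.1 w.1 p.2.1 w.2.1 p.2.2 w.2.2]; rfl

theorem snd_snd_eq_zero_of_mem_annSeq (hE : IsElrMul b u mul) {k : ℕ} {p : ElrSpace F U a d}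
    (hp : p ∈ annSeq mul k) (j : Fin (d + 1)) (hj : j + k < d + 1) : p.2.2 j = 0 := by
  induction k generalizing p j with
  | zero => simp_all [annSeq]
  | succ k ih =>
    obtain ⟨j, rfl⟩ : ∃ j' : Fin d, j'.castSucc = j := ⟨⟨j, by omega⟩, rfl⟩
    have := ih (hp (0, 0, Pi.single j.castSucc 1)).1 j.succ <| by
      simp only [Fin.val_castSucc, Fin.val_succ] at hj ⊢
      omega
    simpa [hE.snd_snd_succ] using this

theorem snd_fst_eq_zero_of_mem_annSeq (hE : IsElrMul b u mul)
    (hb : ∀ x : U, (∀ y : U, b x y = 0) → x = 0) {k : ℕ} (hk : k ≤ d + 1)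
    {p : ElrSpace F U a d} (hp : p ∈ annSeq mul k) : p.2.1 = 0 := by
  cases k with
  | zero => simp_all [annSeq]
  | succ k =>
    refine hb _ fun y => ?_
    have := hE.snd_snd_eq_zero_of_mem_annSeq (hp (0, y, 0)).1 0 (by simp only [Fin.val_zero]; omega)
    rwa [hE.snd_snd_zero] at this

theorem fst_eq_zero_of_mem_annSeq (hE : IsElrMul b u mul)
    (hb : ∀ x : U, (∀ y : U, b x y = 0) → x = 0) (hu : u ≠ 0) {k : ℕ} {p : ElrSpace F U a d}
    (hp : p ∈ annSeq mul k) (i : Fin (a + 1)) (hi : i + k < a + d + 3) : p.1 i = 0 := by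
  induction k generalizing p i with
  | zero => simp_all [annSeq]
  | succ k ih =>
    have hmul := (hp (Pi.single i 1, 0, 0)).1
    rcases Fin.eq_castSucc_or_eq_last i with ⟨i, rfl⟩ | rfl
    · simp only [Fin.val_castSucc] at hi
      simpa [hE.fst_succ] using ih hmul i.succ (by rw [Fin.val_succ]; omega)
    · have := hE.snd_fst_eq_zero_of_mem_annSeq hb (by simp only [Fin.val_last] at hi; omega) hmul
      simpa [hE.snd_fst, hu] using this

theorem single_zero_not_mem_annSeq (hE : IsElrMul b u mul)
    (hb : ∀ x : U, (∀ y : U, b x y = 0) → x = 0) (hu : u ≠ 0) :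
    ((Pi.single 0 1, 0, 0) : ElrSpace F U a d) ∉ annSeq mul (a + d + 2) := fun h => by
  simpa using hE.fst_eq_zero_of_mem_annSeq hb hu h 0 (by simp)

theorem finrank_annSeq_le (hE : IsElrMul b u mul) (hb : ∀ x : U, (∀ y : U, b x y = 0) → x = 0)
    (hu : u ≠ 0) : Module.finrank F (annSeq mul (d + 1)) ≤ d + 1 := by
  let tail := LinearMap.inr F (Fin (a + 1) → F) (U × (Fin (d + 1) → F)) ∘ₗ
    LinearMap.inr F U (Fin (d + 1) → F)
  have hle : annSeq mul (d + 1) ≤ LinearMap.range tail := fun p hp =>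
    ⟨p.2.2, Prod.ext (funext fun i => (hE.fst_eq_zero_of_mem_annSeq hb hu hp i (by omega)).symm)
      (Prod.ext (hE.snd_fst_eq_zero_of_mem_annSeq hb le_rfl hp).symm rfl)⟩
  calc Module.finrank F (annSeq mul (d + 1)) ≤ Module.finrank F (LinearMap.range tail) :=
        Submodule.finrank_mono hle
    _ ≤ Module.finrank F (Fin (d + 1) → F) := LinearMap.finrank_range_le tail
    _ = d + 1 := Module.finrank_fin_fun F

theorem mul_single_left (hE : IsElrMul b u mul) (i : Fin (a + 1)) (w : ElrSpace F U a d) :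
    mul (Pi.single i 1, 0, 0) w = w.1 i • mul (Pi.single i 1, 0, 0) (Pi.single i 1, 0, 0) := by
  rw [hE, hE]
  refine Prod.ext (funext fun t => ?_) (Prod.ext ?_ (funext fun t => ?_))
  · refine Fin.cases ?_ (fun j => ?_) t
    · simp
    · by_cases hj : j.castSucc = i
      · subst hj; simp [mul_comm]
      · simp [Pi.single_eq_of_ne hj]
  · by_cases hi : Fin.last a = i
    · subst hi; simp
    · simp [Pi.single_eq_of_ne hi]
  · refine Fin.cases ?_ (fun j => ?_) t <;> simp

theorem mul_single_mul_self (hE : IsElrMul b u mul) (i : Fin (a + 1)) :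
    mul (Pi.single i 1, 0, 0) (mul (Pi.single i 1, 0, 0) (Pi.single i 1, 0, 0)) = 0 := by
  rw [hE.mul_single_left]
  suffices (mul (Pi.single i 1, 0, 0) (Pi.single i 1, 0, 0)).1 i = 0 by rw [this, zero_smul]
  refine Fin.cases (hE.fst_zero _ _) (fun j => ?_) i
  simp [hE.fst_succ, Pi.single_eq_of_ne Fin.castSucc_lt_succ.ne]

theorem single_castSucc_mul_self (hE : IsElrMul b u mul) (j : Fin a) :
    mul (Pi.single j.castSucc 1, 0, 0) (Pi.single j.castSucc 1, 0, 0) =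
      ((Pi.single j.succ 1, 0, 0) : ElrSpace F U a d) := by
  rw [hE]
  refine Prod.ext (funext fun t => ?_) (Prod.ext ?_ (funext fun t => ?_))
  · refine Fin.cases ?_ (fun i => ?_) t
    · simp [(Fin.succ_ne_zero j).symm]
    · by_cases hi : i = j
      · subst hi; simp
      · simp [Pi.single_eq_of_ne (Fin.castSucc_injective _ |>.ne hi),
          Pi.single_eq_of_ne (Fin.succ_injective _ |>.ne hi)]
  · simp
  · refine Fin.cases ?_ (fun j => ?_) t <;> simp

end IsElrMul

end Elr

section ChainSquares

variable {a n d : ℕ} {mul : A →ₗ[F] A →ₗ[F] A} {h : Module.Basis (Fin (a + 1 + n + (d + 1))) F A}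

variable (mul h) in
/-- The multiplication table of the theorem, on the blocks `[0, a]`, `[a + 1, a + n]` and
`[a + n + 1, a + n + d + 1]` of the basis. -/
structure HasChainSquares : Prop where
  one_le_n : 1 ≤ n
  natural : IsNaturalBasis mul h
  sq_head : ∀ (i : Fin (a + 1 + n + (d + 1))) (hi : (i : ℕ) < a + 1),
    mul (h i) (h i) = h ⟨(i : ℕ) + 1, by omega⟩ + h ⟨(i : ℕ) + 2, by omega⟩
  sq_mid : ∀ i : Fin (a + 1 + n + (d + 1)), a + 1 ≤ (i : ℕ) → (i : ℕ) < a + 1 + n →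
    ∀ j : Fin (a + 1 + n + (d + 1)), (j : ℕ) < a + 1 + n → h.repr (mul (h i) (h i)) j = 0
  sq_tail : ∀ (i : Fin (a + 1 + n + (d + 1))) (_ : a + 1 + n ≤ (i : ℕ))
    (hi : (i : ℕ) + 3 ≤ a + 1 + n + (d + 1)),
    mul (h i) (h i) = h ⟨(i : ℕ) + 1, by omega⟩ + h ⟨(i : ℕ) + 2, by omega⟩
  sq_penult : mul (h ⟨a + n + d, by omega⟩) (h ⟨a + n + d, by omega⟩) =
    h ⟨a + 1 + n + d, by omega⟩
  sq_last : mul (h ⟨a + 1 + n + d, by omega⟩) (h ⟨a + 1 + n + d, by omega⟩) = 0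

/-- The level of the upper annihilating series by which the basis vector `h m` has appeared. -/
def chainDepth (a n d m : ℕ) : ℕ :=
  if m ≤ a then a + d + 3 - m else if m ≤ a + n then d + 2 else a + n + d + 2 - m

namespace HasChainSquares

theorem repr_sq_head (hA : HasChainSquares mul h) {j : Fin (a + 1 + n + (d + 1))}
    (hj : (j : ℕ) < a + 1) (k : Fin (a + 1 + n + (d + 1))) :
    h.repr (mul (h j) (h j)) k =
      (if (j : ℕ) + 1 = k then 1 else 0) + (if (j : ℕ) + 2 = k then 1 else 0) := by
  simp [hA.sq_head j hj, Finsupp.single_apply, Fin.ext_iff]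

theorem repr_sq_ne_zero (hA : HasChainSquares mul h) {j k : Fin (a + 1 + n + (d + 1))}
    (hjk : h.repr (mul (h j) (h j)) k ≠ 0) :
    (j : ℕ) < a + 1 ∧ ((k : ℕ) = j + 1 ∨ (k : ℕ) = j + 2) ∨
      a + 1 ≤ (j : ℕ) ∧ a + 1 + n ≤ (k : ℕ) ∧ (j : ℕ) < k := by
  rcases lt_or_ge (j : ℕ) (a + 1) with hhead | hj
  · rw [hA.sq_head j hhead] at hjk
    have := h.eq_or_eq_of_repr_add_ne_zero hjk
    simp only [Fin.ext_iff] at this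
    exact Or.inl ⟨hhead, this⟩
  refine Or.inr ⟨hj, ?_⟩
  rcases lt_or_ge (j : ℕ) (a + 1 + n) with hmid | htail
  · by_contra hk
    exact hjk (hA.sq_mid j hj hmid k (by omega))
  obtain h3 | hpen | hlast : (j : ℕ) + 3 ≤ a + 1 + n + (d + 1) ∨ (j : ℕ) = a + n + d ∨
      (j : ℕ) = a + 1 + n + d := by omega
  · rw [hA.sq_tail j htail h3] at hjk
    have := h.eq_or_eq_of_repr_add_ne_zero hjk
    simp only [Fin.ext_iff] at this
    omega
  · rw [show j = ⟨a + n + d, by omega⟩ from Fin.ext hpen, hA.sq_penult] at hjk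
    have := h.eq_of_repr_self_ne_zero hjk
    simp only [Fin.ext_iff] at this
    omega
  · simp [show j = ⟨a + 1 + n + d, by omega⟩ from Fin.ext hlast, hA.sq_last] at hjk

theorem basis_mem_annSeq (hA : HasChainSquares mul h) {k : ℕ} {j : Fin (a + 1 + n + (d + 1))}
    (hj : chainDepth a n d j ≤ k) : h j ∈ annSeq mul k := by
  induction k generalizing j with
  | zero => unfold chainDepth at hj; split_ifs at hj <;> omega
  | succ k ih =>
    refine hA.natural.basis_mem_annSucc (h.mem_of_forall_repr_ne_zero fun i hi => ih ?_)
    have := hA.repr_sq_ne_zero hi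
    have := i.isLt
    unfold chainDepth at hj ⊢
    split_ifs at hj ⊢ <;> omega

theorem repr_mul_zero (hA : HasChainSquares mul h) (x y : A) :
    h.repr (mul x y) ⟨0, by omega⟩ = 0 := by
  by_contra hne
  obtain ⟨j, -, -, hj⟩ := hA.natural.exists_of_repr_mul_ne_zero hne
  have := hA.repr_sq_ne_zero hj
  simp only at this
  omega

theorem repr_mul_one (hA : HasChainSquares mul h) (x y : A) :
    h.repr (mul x y) ⟨1, by omega⟩ = h.repr x ⟨0, by omega⟩ * h.repr y ⟨0, by omega⟩ := by
  rw [hA.natural.repr_mul, Fintype.sum_eq_single ⟨0, by omega⟩ fun j hj => ?_]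
  · rw [hA.repr_sq_head (by simp)]
    simp
  · suffices h.repr (mul (h j) (h j)) ⟨1, by omega⟩ = 0 by rw [this, mul_zero]
    by_contra hne
    have := hA.repr_sq_ne_zero hne
    rw [ne_eq, Fin.ext_iff] at hj
    simp only at this hj
    omega

theorem repr_mul_add_two (hA : HasChainSquares mul h) (x y : A) (k : ℕ) (hk : k < a) :
    h.repr (mul x y) ⟨k + 2, by omega⟩ =
      h.repr x ⟨k, by omega⟩ * h.repr y ⟨k, by omega⟩ +
        h.repr x ⟨k + 1, by omega⟩ * h.repr y ⟨k + 1, by omega⟩ := by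
  rw [hA.natural.repr_mul, Fintype.sum_eq_add ⟨k, by omega⟩ ⟨k + 1, by omega⟩
    (by simp [Fin.ext_iff]) fun j hj => ?_]
  · simp [hA.repr_sq_head (j := ⟨k, by omega⟩) (show k < a + 1 by omega),
      hA.repr_sq_head (j := ⟨k + 1, by omega⟩) (show k + 1 < a + 1 by omega)]
  · suffices h.repr (mul (h j) (h j)) ⟨k + 2, by omega⟩ = 0 by rw [this, mul_zero]
    by_contra hne
    have := hA.repr_sq_ne_zero hne
    simp only [ne_eq, Fin.ext_iff] at this hj
    omega

theorem repr_one_eq_zero (hA : HasChainSquares mul h) (ha : 1 ≤ a) {x : A}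
    (hx0 : h.repr x ⟨0, by omega⟩ ≠ 0) (hx : mul x (mul x x) = 0) :
    h.repr x ⟨1, by omega⟩ = 0 := by
  have h2 := hA.repr_mul_add_two x (mul x x) 0 ha
  rw [hx, map_zero, Finsupp.coe_zero, Pi.zero_apply, hA.repr_mul_zero, hA.repr_mul_one,
    mul_zero, zero_add] at h2
  exact (mul_eq_zero.1 h2.symm).resolve_right (mul_ne_zero hx0 hx0)

theorem false_of_two_le (hA : HasChainSquares mul h) (ha : 2 ≤ a) {x : A}
    (hx0 : h.repr x ⟨0, by omega⟩ ≠ 0) (hx : mul x (mul x x) = 0)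
    (hz : mul (mul x x) (mul (mul x x) (mul x x)) = 0) : False := by
  set c := h.repr x ⟨0, by omega⟩
  set z := mul x x
  have hz0 : h.repr z ⟨0, by omega⟩ = 0 := hA.repr_mul_zero x x
  have hz1 : h.repr z ⟨1, by omega⟩ = c * c := hA.repr_mul_one x x
  have hz2 : h.repr z ⟨2, by omega⟩ = c * c := by
    rw [hA.repr_mul_add_two x x 0 (by omega), hA.repr_one_eq_zero (by omega) hx0 hx]
    ring
  have hw1 : h.repr (mul z z) ⟨1, by omega⟩ = 0 := by rw [hA.repr_mul_one, hz0, mul_zero]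
  have hw2 : h.repr (mul z z) ⟨2, by omega⟩ = c ^ 4 := by
    rw [hA.repr_mul_add_two z z 0 (by omega), hz0, hz1]
    ring
  have h3 := hA.repr_mul_add_two z (mul z z) 1 ha
  rw [hz, map_zero, Finsupp.coe_zero, Pi.zero_apply, hw1, hz2, hw2] at h3
  exact hx0 (pow_eq_zero_iff (n := 6) (by norm_num) |>.1 (by linear_combination -h3))

theorem repr_zero_ne_zero_of_not_mem (hA : HasChainSquares mul h) {x : A}
    (hx : x ∉ annSeq mul (a + d + 2)) : h.repr x ⟨0, by omega⟩ ≠ 0 := fun h0 =>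
  hx <| h.mem_of_forall_repr_ne_zero fun j hj => hA.basis_mem_annSeq <| by
    have : (j : ℕ) ≠ 0 := fun e => hj (by rwa [show j = ⟨0, by omega⟩ from Fin.ext e])
    unfold chainDepth
    split_ifs <;> omega

theorem repr_mul_eq_zero_of_repr_eq_zero (hA : HasChainSquares mul h) {x y : A}
    (hx : h.repr x ⟨a, by omega⟩ = 0) {k : Fin (a + 1 + n + (d + 1))} (hk : a + 2 ≤ (k : ℕ))
    (hkn : (k : ℕ) < a + 1 + n) : h.repr (mul x y) k = 0 := by
  by_contra hne
  obtain ⟨i, hi, -, hik⟩ := hA.natural.exists_of_repr_mul_ne_zero hne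
  rcases hA.repr_sq_ne_zero hik with ⟨hia, hki⟩ | ⟨-, hk', -⟩
  · exact hi (by rwa [show i = ⟨a, by omega⟩ from Fin.ext (show (i : ℕ) = a by omega)])
  · omega

theorem repr_sq_eq_zero_of_eq_one (hA : HasChainSquares mul h) (ha : a = 1) {x : A}
    (hx0 : h.repr x ⟨0, by omega⟩ ≠ 0) (hx : mul x (mul x x) = 0)
    (hz : mul (mul x x) (mul (mul x x) (mul x x)) = 0) :
    h.repr (mul (h ⟨a + 1, by omega⟩) (h ⟨a + 1, by omega⟩)) ⟨a + 1 + n, by omega⟩ = 0 := by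
  subst ha
  have hx1 := hA.repr_one_eq_zero le_rfl hx0 hx
  set c := h.repr x ⟨0, by omega⟩
  set z := mul x x
  have hz0 : h.repr z ⟨0, by omega⟩ = 0 := hA.repr_mul_zero x x
  have hz2 : h.repr z ⟨2, by omega⟩ = c * c := by
    rw [hA.repr_mul_add_two x x 0 zero_lt_one, hx1]
    ring
  have hw2 : h.repr (mul z z) ⟨2, by omega⟩ = c ^ 4 := by
    rw [hA.repr_mul_add_two z z 0 zero_lt_one, hz0, hA.repr_mul_one]
    ring
  have key := hA.natural.repr_mul z (mul z z) ⟨1 + 1 + n, by omega⟩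
  rw [hz, map_zero, Finsupp.coe_zero, Pi.zero_apply,
    Fintype.sum_eq_single ⟨2, by omega⟩ fun j hj => ?_, hz2, hw2] at key
  · exact (mul_eq_zero.1 key.symm).resolve_left
      (mul_ne_zero (mul_ne_zero hx0 hx0) (pow_ne_zero 4 hx0))
  -- The other terms vanish: `(z²)₁ = z₀² = 0`, and since `x₁ = 0` the only middle-block
  -- coordinate of `z` is the one at index `2`.
  by_contra hne
  simp only [mul_eq_zero, not_or] at hne
  obtain ⟨⟨hzj, hwj⟩, hjj⟩ := hne
  rw [ne_eq, Fin.ext_iff] at hj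
  rcases hA.repr_sq_ne_zero hjj with ⟨hj1, hk⟩ | ⟨hj1, -, hjk⟩
  · refine hwj ?_
    have := hA.one_le_n
    simp only at hk hj
    rw [show j = ⟨1, by omega⟩ from Fin.ext (show (j : ℕ) = 1 by omega), hA.repr_mul_one, hz0,
      mul_zero]
  · simp only at hj hjk
    exact hzj (hA.repr_mul_eq_zero_of_repr_eq_zero hx1 (by omega) (by omega))

theorem basis_mem_annSeq_of_repr_sq_eq_zero (hA : HasChainSquares mul h)
    {j : Fin (a + 1 + n + (d + 1))} (hj : a + 1 ≤ (j : ℕ))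
    (hj0 : h.repr (mul (h j) (h j)) ⟨a + 1 + n, by omega⟩ = 0) : h j ∈ annSeq mul (d + 1) := by
  refine hA.natural.basis_mem_annSucc (h.mem_of_forall_repr_ne_zero fun i hi => ?_)
  refine hA.basis_mem_annSeq ?_
  have hi' : (i : ℕ) ≠ a + 1 + n := fun e =>
    hi (by rwa [show i = ⟨a + 1 + n, by omega⟩ from Fin.ext e])
  have := hA.repr_sq_ne_zero hi
  have := i.isLt
  unfold chainDepth
  split_ifs <;> omega

theorem le_finrank_annSeq (hA : HasChainSquares mul h)
    (hmem : h ⟨a + 1, by omega⟩ ∈ annSeq mul (d + 1)) :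
    d + 2 ≤ Module.finrank F (annSeq mul (d + 1)) := by
  have := Module.Finite.of_basis h
  let tail (t : Fin (d + 1)) : Fin (a + 1 + n + (d + 1)) := ⟨a + 1 + n + t, by omega⟩
  have hinj : Function.Injective (Fin.cons ⟨a + 1, by omega⟩ tail : Fin (d + 2) → _) := by
    refine Fin.cons_injective_iff.2 ⟨?_, fun s t hst => ?_⟩
    · rintro ⟨t, ht⟩
      have := hA.one_le_n
      simp only [Fin.ext_iff, tail] at ht
      omega
    · simpa [tail, Fin.ext_iff] using hst
  have := h.card_le_finrank_of_mem hinj fun t => Fin.cases hmem (fun t => hA.basis_mem_annSeq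
    (by have := t.isLt; simp only [Fin.cons_succ, tail, chainDepth]; split_ifs <;> omega)) t
  rwa [Fintype.card_fin] at this

end HasChainSquares

end ChainSquares

/-- Here `l = a + 1`, `r = d + 1`, and `h i` is the paper's `h_{i+1}`. -/
theorem concrete_l_ge_two_not_iso_Elr
    (F : Type*) [Field F]
    (a d n : ℕ) (hl : 1 ≤ a)  -- `l = a + 1 ≥ 2`
    (hn : 1 ≤ n)
    {A : Type*} [AddCommGroup A] [Module F A]
    (mulA : A →ₗ[F] A →ₗ[F] A)
    (h : Module.Basis (Fin (a + 1 + n + (d + 1))) F A)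
    (hnat : IsNaturalBasis mulA h)
    (hs1 : ∀ (i : Fin (a + 1 + n + (d + 1))) (hi : (i : ℕ) < a + 1),
      mulA (h i) (h i) = h ⟨(i : ℕ) + 1, by omega⟩ + h ⟨(i : ℕ) + 2, by omega⟩)
    (hs2 : ∀ i : Fin (a + 1 + n + (d + 1)), a + 1 ≤ (i : ℕ) → (i : ℕ) < a + 1 + n →
      ∀ j : Fin (a + 1 + n + (d + 1)), (j : ℕ) < a + 1 + n →
        h.repr (mulA (h i) (h i)) j = 0)
    (hs3 : ∀ (i : Fin (a + 1 + n + (d + 1))) (hi1 : a + 1 + n ≤ (i : ℕ))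
      (hi2 : (i : ℕ) + 3 ≤ a + 1 + n + (d + 1)),
      mulA (h i) (h i) = h ⟨(i : ℕ) + 1, by omega⟩ + h ⟨(i : ℕ) + 2, by omega⟩)
    (hs4 : mulA (h ⟨a + n + d, by omega⟩) (h ⟨a + n + d, by omega⟩) =
      h ⟨a + 1 + n + d, by omega⟩)
    (hs5 : mulA (h ⟨a + 1 + n + d, by omega⟩) (h ⟨a + 1 + n + d, by omega⟩) = 0) :
    ∀ (U : Type*) (_ : AddCommGroup U) (_ : Module F U),
      Module.finrank F U = n →
      ∀ b : U →ₗ[F] U →ₗ[F] F, (∀ x y : U, b x y = b y x) →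
        (∀ x : U, (∀ y : U, b x y = 0) → x = 0) →
      ∀ u : U, u ≠ 0 →
      ∀ mul' : ((Fin (a + 1) → F) × U × (Fin (d + 1) → F)) →ₗ[F]
          ((Fin (a + 1) → F) × U × (Fin (d + 1) → F)) →ₗ[F]
          ((Fin (a + 1) → F) × U × (Fin (d + 1) → F)),
        (∀ (α γ : Fin (a + 1) → F) (x y : U) (β δ : Fin (d + 1) → F),
          mul' (α, x, β) (γ, y, δ) =
            (Fin.cases (motive := fun _ => F) 0
                (fun j : Fin a => α j.castSucc * γ j.castSucc),
             (α (Fin.last a) * γ (Fin.last a)) • u,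
             Fin.cases (motive := fun _ => F) (b x y)
                (fun j : Fin d => β j.castSucc * δ j.castSucc))) →
        ¬ ∃ φ : A ≃ₗ[F] ((Fin (a + 1) → F) × U × (Fin (d + 1) → F)),
            ∀ x y, φ (mulA x y) = mul' (φ x) (φ y) := by
  intro U _ _ _ b _ hb u hu mul hmul ⟨φ, hφ⟩
  have hA : HasChainSquares mulA h := ⟨hn, hnat, hs1, hs2, hs3, hs4, hs5⟩
  have hE : IsElrMul b u mul := hmul
  set x := φ.symm (Pi.single 0 1, 0, 0)
  have hφx : φ x = (Pi.single 0 1, 0, 0) := φ.apply_symm_apply _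
  have hx0 : h.repr x ⟨0, by omega⟩ ≠ 0 := hA.repr_zero_ne_zero_of_not_mem fun hmem =>
    hE.single_zero_not_mem_annSeq hb hu (hφx ▸ (mem_annSeq_iff_of_map_mul φ hφ _ x).1 hmem)
  have hxx : mulA x (mulA x x) = 0 :=
    φ.map_eq_zero_iff.1 (by rw [hφ, hφ, hφx, hE.mul_single_mul_self])
  have hzz : mulA (mulA x x) (mulA (mulA x x) (mulA x x)) = 0 := φ.map_eq_zero_iff.1 <| by
    simp only [hφ, hφx]
    rw [show (0 : Fin (a + 1)) = (⟨0, hl⟩ : Fin a).castSucc from rfl,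
      hE.single_castSucc_mul_self, hE.mul_single_mul_self]
  rcases (by omega : a = 1 ∨ 2 ≤ a) with ha | ha
  · have hlow := hA.le_finrank_annSeq (hA.basis_mem_annSeq_of_repr_sq_eq_zero le_rfl
      (hA.repr_sq_eq_zero_of_eq_one ha hx0 hxx hzz))
    rw [finrank_annSeq_eq_of_map_mul φ hφ] at hlow
    exact absurd (hlow.trans (hE.finrank_annSeq_le hb hu)) (by omega)
  · exact hA.false_of_two_le ha hx0 hxx hzz
end
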